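/- Let 1 ≤ q < q' < 2, let V be a real Banach space and let X ∈ C_{0,q}(V). Then ‖X − π_P X‖_{q'} → 0 as the mesh |P| → 0; that is, for every ε > 0 there exists δ > 0 such that every finite partition P of [0,1] with mesh |P| < δ satisfies ‖X − π_P X‖_{q'} ≤ ε. -/

import Mathlib

/-!
Write `Z = X - π_P X`. Uniform continuity of `X` makes `Z` uniformly small, `‖Z‖_∞ ≤ 2η`
with `η` the oscillation of `X` on the intervals of `P`. On the other hand `Z` vanishes on `P`, so
an increment of `Z` over an interval of a partition `D` splits at the first and the last point
of `P` it contains into two increments inside single intervals of `P`; there the increment of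
`π_P X` is the fraction `λ` of the length of that interval times an increment of `X`, and since
`λ ^ q ≤ λ` for `q ≥ 1` the fractions add up to at most one per interval of `P`. Hence
`∑ ‖ΔZ‖ ^ q ≤ 4 ^ q ‖X‖_q ^ q`, and interpolating with the uniform bound,
`∑ ‖ΔZ‖ ^ q' ≤ (4η) ^ (q' - q) ∑ ‖ΔZ‖ ^ q`, which is small.
-/

open scoped ENNReal

universe u

/-- A finite partition of the interval `[s,t]`: monotone points `pt 0 = s ≤ pt 1 ≤ ⋯ ≤ pt N = t`. -/
structure Subdivision (s t : ℝ) where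
  N : ℕ
  pt : ℕ → ℝ
  pos : 0 < N
  first : pt 0 = s
  last : pt N = t
  mono : ∀ i, i < N → pt i ≤ pt (i + 1)

/-- The mesh of a partition: the largest length of a subinterval. -/
noncomputable def Subdivision.mesh {s t : ℝ} (P : Subdivision s t) : ℝ :=
  (Finset.range P.N).sup' (Finset.nonempty_range_iff.mpr P.pos.ne')
    (fun i => P.pt (i + 1) - P.pt i)

/-- The `q`-variation norm of a path `X : [0,1] → V`, as a value in `[0,∞]`. -/
noncomputable def qVar {V : Type u} [NormedAddCommGroup V] (q : ℝ) (X : ℝ → V) : ℝ≥0∞ :=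
  ⨆ P : Subdivision 0 1,
    ENNReal.ofReal
      ((∑ i ∈ Finset.range P.N, ‖X (P.pt (i + 1)) - X (P.pt i)‖ ^ q) ^ (1 / q))

/-- `Y` is the piecewise linear approximation of the path `X` along the partition `P`. -/
def IsPiecewiseLinearApprox {V : Type u} [NormedAddCommGroup V] [Module ℝ V]
    (P : Subdivision 0 1) (X Y : ℝ → V) : Prop :=
  ∀ i, i < P.N → ∀ u, P.pt i ≤ u → u ≤ P.pt (i + 1) →
    Y u = X (P.pt i)
      + ((u - P.pt i) / (P.pt (i + 1) - P.pt i)) • (X (P.pt (i + 1)) - X (P.pt i))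

open Finset

lemma Real.rpow_add_le_mul_rpow_add_rpow {a b p : ℝ} (ha : 0 ≤ a) (hb : 0 ≤ b) (hp : 1 ≤ p) :
    (a + b) ^ p ≤ 2 ^ (p - 1) * (a ^ p + b ^ p) := by
  lift a to NNReal using ha
  lift b to NNReal using hb
  exact_mod_cast NNReal.rpow_add_le_mul_rpow_add_rpow a b hp

lemma sum_rpow_add_le {ι : Type*} (T : Finset ι) {a b : ι → ℝ} (ha : ∀ j ∈ T, 0 ≤ a j)
    (hb : ∀ j ∈ T, 0 ≤ b j) {p : ℝ} (hp : 1 ≤ p) :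
    ∑ j ∈ T, (a j + b j) ^ p ≤ 2 ^ (p - 1) * (∑ j ∈ T, a j ^ p + ∑ j ∈ T, b j ^ p) := by
  rw [← sum_add_distrib, mul_sum]
  exact sum_le_sum fun j hj => Real.rpow_add_le_mul_rpow_add_rpow (ha j hj) (hb j hj) hp

lemma Real.rpow_le_rpow_sub_mul_rpow {a w p r : ℝ} (ha : 0 ≤ a) (haw : a ≤ w) (hp : 0 < p)
    (hpr : p ≤ r) : a ^ r ≤ w ^ (r - p) * a ^ p := by
  rcases ha.eq_or_lt with rfl | ha
  · rw [Real.zero_rpow (hp.trans_le hpr).ne', Real.zero_rpow hp.ne', mul_zero]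
  · calc a ^ r = a ^ (r - p) * a ^ p := by rw [← Real.rpow_add ha, sub_add_cancel]
      _ ≤ w ^ (r - p) * a ^ p := by gcongr

lemma sum_sub_le_sub_of_ordered {u v : ℕ → ℝ} {a b : ℝ} (T : Finset ℕ) (hab : a ≤ b)
    (hu : ∀ j ∈ T, a ≤ u j) (huv : ∀ j ∈ T, u j ≤ v j) (hv : ∀ j ∈ T, v j ≤ b)
    (hvu : ∀ j ∈ T, ∀ k ∈ T, j < k → v j ≤ u k) :
    ∑ j ∈ T, (v j - u j) ≤ b - a := by
  induction T using Finset.induction_on_max generalizing b with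
  | empty => simpa using hab
  | insert M T hT ih =>
    have hM := mem_insert_self M T
    have hsub : T ⊆ insert M T := subset_insert M T
    rw [sum_insert fun h => lt_irrefl M (hT M h)]
    have := ih (hu M hM) (fun j hj => hu j (hsub hj)) (fun j hj => huv j (hsub hj))
      (fun j hj => hvu j (hsub hj) M hM (hT j hj))
      (fun j hj k hk => hvu j (hsub hj) k (hsub hk))
    linarith [huv M hM, hv M hM]

noncomputable def qVarSum {V : Type*} [NormedAddCommGroup V] (q : ℝ) (X : ℝ → V) {s t : ℝ}
    (Q : Subdivision s t) : ℝ :=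
  ∑ i ∈ range Q.N, ‖X (Q.pt (i + 1)) - X (Q.pt i)‖ ^ q

section qVar

variable {V : Type u} [NormedAddCommGroup V] {q : ℝ} {X : ℝ → V}

lemma qVarSum_nonneg {s t : ℝ} (Q : Subdivision s t) : 0 ≤ qVarSum q X Q :=
  sum_nonneg fun _ _ => Real.rpow_nonneg (norm_nonneg _) q

lemma qVarSum_le_toReal_qVar_rpow (hq : 0 < q) (hX : qVar q X ≠ ⊤) (Q : Subdivision 0 1) :
    qVarSum q X Q ≤ (qVar q X).toReal ^ q := by
  have h : ENNReal.ofReal (qVarSum q X Q ^ (1 / q)) ≤ qVar q X :=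
    le_iSup (fun Q : Subdivision 0 1 => ENNReal.ofReal (qVarSum q X Q ^ (1 / q))) Q
  rw [ENNReal.ofReal_le_iff_le_toReal hX, one_div,
    Real.rpow_inv_le_iff_of_pos (qVarSum_nonneg Q) ENNReal.toReal_nonneg hq] at h
  exact h

lemma qVar_le_ofReal_of_qVarSum_le (hq : 0 < q) {ε : ℝ} (hε : 0 ≤ ε)
    (h : ∀ Q : Subdivision 0 1, qVarSum q X Q ≤ ε ^ q) : qVar q X ≤ ENNReal.ofReal ε :=
  iSup_le fun Q => show ENNReal.ofReal (qVarSum q X Q ^ (1 / q)) ≤ _ from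
    ENNReal.ofReal_le_ofReal <| by
      rw [one_div, Real.rpow_inv_le_iff_of_pos (qVarSum_nonneg Q) hε hq]
      exact h Q

end qVar

namespace Subdivision

variable {s t : ℝ} (P : Subdivision s t)

lemma pt_le_pt {i j : ℕ} (hij : i ≤ j) (hj : j ≤ P.N) : P.pt i ≤ P.pt j := by
  induction j, hij using Nat.le_induction with
  | base => exact le_rfl
  | succ n hin ih => exact (ih (by omega)).trans (P.mono n (by omega))

lemma pt_mem_Icc {i : ℕ} (hi : i ≤ P.N) : P.pt i ∈ Set.Icc s t :=
  ⟨by simpa [P.first] using P.pt_le_pt (Nat.zero_le i) hi,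
    by simpa [P.last] using P.pt_le_pt hi le_rfl⟩

lemma pt_succ_sub_pt_le_mesh {i : ℕ} (hi : i < P.N) : P.pt (i + 1) - P.pt i ≤ P.mesh :=
  le_sup' (fun i => P.pt (i + 1) - P.pt i) (mem_range.mpr hi)

open Classical in
/-- The index `i` of an interval `[P.pt i, P.pt (i + 1)]` containing `x`, the last one if several
do. -/
noncomputable def idx (x : ℝ) : ℕ :=
  Nat.findGreatest (fun i => P.pt i ≤ x) (P.N - 1)

lemma idx_lt (x : ℝ) : P.idx x < P.N :=
  (Nat.findGreatest_le _).trans_lt (Nat.sub_lt P.pos one_pos)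

lemma pt_idx_le {x : ℝ} (hx : s ≤ x) : P.pt (P.idx x) ≤ x := by
  classical
  exact Nat.findGreatest_spec (P := fun i => P.pt i ≤ x) (Nat.zero_le _) (by rwa [P.first])

lemma le_pt_idx_succ {x : ℝ} (hx : x ≤ t) : x ≤ P.pt (P.idx x + 1) := by
  classical
  rcases (Nat.le_sub_one_of_lt (P.idx_lt x)).lt_or_eq with h | h
  · exact (not_le.mp (Nat.findGreatest_is_greatest (P := fun i => P.pt i ≤ x)
      (k := P.idx x + 1) (Nat.lt_succ_self _) h)).le
  · rwa [h, Nat.sub_add_cancel P.pos, P.last]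

lemma idx_mono {x y : ℝ} (hxy : x ≤ y) : P.idx x ≤ P.idx y := by
  classical
  exact Nat.findGreatest_mono (fun _ hi => hi.trans hxy) le_rfl

lemma norm_sub_le_of_forall_eq_zero {V : Type*} [NormedAddCommGroup V] {Z : ℝ → V}
    (hZ : ∀ i ≤ P.N, Z (P.pt i) = 0) {a b : ℝ} (ha : s ≤ a) (hab : a ≤ b) (hb : b ≤ t) :
    ‖Z b - Z a‖ ≤ ‖Z (min (P.pt (P.idx a + 1)) b) - Z a‖ + ‖Z b - Z (max (P.pt (P.idx b)) a)‖ := by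
  rcases (P.idx_mono hab).lt_or_eq with hlt | heq
  · have h1 : P.pt (P.idx a + 1) ≤ P.pt (P.idx b) := P.pt_le_pt hlt (P.idx_lt b).le
    rw [min_eq_left (h1.trans (P.pt_idx_le (ha.trans hab))),
      max_eq_left ((P.le_pt_idx_succ (hab.trans hb)).trans h1), hZ _ (P.idx_lt a),
      hZ _ (P.idx_lt b).le]
    calc ‖Z b - Z a‖ = ‖(0 - Z a) + (Z b - 0)‖ := by rw [zero_sub, sub_zero, neg_add_eq_sub]
      _ ≤ _ := norm_add_le _ _
  · rw [min_eq_right (heq ▸ P.le_pt_idx_succ hb)]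
    exact le_add_of_nonneg_right (norm_nonneg _)

def Inscribed (u v : ℕ → ℝ) : Prop :=
  ∀ j < P.N, P.pt j ≤ u j ∧ u j ≤ v j ∧ v j ≤ P.pt (j + 1)

variable {P} {u v : ℕ → ℝ}

lemma Inscribed.le_of_lt (h : P.Inscribed u v) {j k : ℕ} (hjk : j < k)
    (hk : k < P.N) : v j ≤ u k :=
  ((h j (hjk.trans hk)).2.2.trans (P.pt_le_pt hjk hk.le)).trans (h k hk).1

def refine (h : P.Inscribed u v) : Subdivision s t where
  N := 3 * P.N
  pt i := if i % 3 = 0 then P.pt (i / 3) else if i % 3 = 1 then u (i / 3) else v (i / 3)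
  pos := by have := P.pos; omega
  first := by simp [P.first]
  last := by simp [P.last]
  mono i hi := by
    obtain ⟨k, r, hr, rfl⟩ : ∃ k r, r < 3 ∧ i = 3 * k + r :=
      ⟨i / 3, i % 3, Nat.mod_lt _ (by norm_num), (Nat.div_add_mod i 3).symm⟩
    have hk := h k (by omega)
    interval_cases r <;> simp [Nat.add_assoc, Nat.mul_add_div, hk]

lemma refine_pt_three_mul_add_one (h : P.Inscribed u v) (k : ℕ) :
    (P.refine h).pt (3 * k + 1) = u k := by
  simp [refine, Nat.mul_add_div]

lemma refine_pt_three_mul_add_two (h : P.Inscribed u v) (k : ℕ) :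
    (P.refine h).pt (3 * k + 2) = v k := by
  simp [refine, Nat.mul_add_div]

lemma sum_rpow_norm_sub_le_qVarSum_refine {V : Type*} [NormedAddCommGroup V] (X : ℝ → V)
    (q : ℝ) (h : P.Inscribed u v) :
    ∑ j ∈ range P.N, ‖X (v j) - X (u j)‖ ^ q ≤ qVarSum q X (P.refine h) := by
  calc ∑ j ∈ range P.N, ‖X (v j) - X (u j)‖ ^ q
      = ∑ i ∈ (range P.N).image (fun k => 3 * k + 1),
          ‖X ((P.refine h).pt (i + 1)) - X ((P.refine h).pt i)‖ ^ q := by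
        rw [sum_image fun _ _ _ _ hab => by omega]
        simp only [refine_pt_three_mul_add_one, refine_pt_three_mul_add_two]
    _ ≤ qVarSum q X (P.refine h) :=
        sum_le_sum_of_subset_of_nonneg
          (fun i hi => by
            obtain ⟨k, hk, rfl⟩ := mem_image.mp hi
            simp only [refine, mem_range] at hk ⊢
            omega)
          fun _ _ _ => Real.rpow_nonneg (norm_nonneg _) q

lemma Inscribed.sum_rpow_div_mul_le {s' t' : ℝ} {D : Subdivision s t}
    (hD : D.Inscribed u v) (P : Subdivision s' t') {ι : ℕ → ℕ}
    (hι : ∀ j < D.N, ι j < P.N ∧ P.pt (ι j) ≤ u j ∧ v j ≤ P.pt (ι j + 1))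
    {q : ℝ} (hq : 1 ≤ q) {w : ℕ → ℝ} (hw : ∀ i, 0 ≤ w i) :
    ∑ j ∈ range D.N, ((v j - u j) / (P.pt (ι j + 1) - P.pt (ι j))) ^ q * w (ι j)
      ≤ ∑ i ∈ range P.N, w i := by
  rw [← sum_fiberwise_of_maps_to fun j hj => mem_range.2 (hι j (mem_range.1 hj)).1]
  refine sum_le_sum fun i hi => ?_
  have hT : ∀ j ∈ (range D.N).filter (ι · = i),
      P.pt i ≤ u j ∧ u j ≤ v j ∧ v j ≤ P.pt (i + 1) := by
    intro j hj
    obtain ⟨hjD, rfl⟩ := mem_filter.1 hj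
    have hj := mem_range.1 hjD
    exact ⟨(hι j hj).2.1, (hD j hj).2.1, (hι j hj).2.2⟩
  have hL : 0 ≤ P.pt (i + 1) - P.pt i := sub_nonneg.2 (P.mono i (mem_range.1 hi))
  have hlen : ∑ j ∈ (range D.N).filter (ι · = i), (v j - u j) ≤ P.pt (i + 1) - P.pt i :=
    sum_sub_le_sub_of_ordered _ (sub_nonneg.1 hL) (fun j hj => (hT j hj).1)
      (fun j hj => (hT j hj).2.1) (fun j hj => (hT j hj).2.2)
      (fun j _ k hk hjk => hD.le_of_lt hjk (mem_range.1 (mem_filter.1 hk).1))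
  calc ∑ j ∈ (range D.N).filter (ι · = i),
        ((v j - u j) / (P.pt (ι j + 1) - P.pt (ι j))) ^ q * w (ι j)
      = ∑ j ∈ (range D.N).filter (ι · = i),
          ((v j - u j) / (P.pt (i + 1) - P.pt i)) ^ q * w i :=
        sum_congr rfl fun j hj => by rw [(mem_filter.1 hj).2]
    _ ≤ ∑ j ∈ (range D.N).filter (ι · = i), (v j - u j) / (P.pt (i + 1) - P.pt i) * w i := by
        refine sum_le_sum fun j hj => ?_
        obtain ⟨h1, h2, h3⟩ := hT j hj
        exact mul_le_mul_of_nonneg_right (Real.rpow_le_self_of_le_one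
          (div_nonneg (sub_nonneg.2 h2) hL) (div_le_one_of_le₀ (by linarith) hL) hq) (hw i)
    _ = (∑ j ∈ (range D.N).filter (ι · = i), (v j - u j)) / (P.pt (i + 1) - P.pt i) * w i := by
        rw [← sum_mul, ← sum_div]
    _ ≤ w i := mul_le_of_le_one_left (hw i) (div_le_one_of_le₀ hlen hL)

end Subdivision

lemma qVarSum_le_rpow_mul_qVarSum {V : Type*} [NormedAddCommGroup V] {s t : ℝ} {Z : ℝ → V}
    {m p r : ℝ} (hZ : ∀ x ∈ Set.Icc s t, ‖Z x‖ ≤ m) (hp : 0 < p) (hpr : p ≤ r)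
    (D : Subdivision s t) : qVarSum r Z D ≤ (2 * m) ^ (r - p) * qVarSum p Z D := by
  rw [qVarSum, qVarSum, mul_sum]
  refine sum_le_sum fun j hj => Real.rpow_le_rpow_sub_mul_rpow (norm_nonneg _) ?_ hp hpr
  have hj := mem_range.1 hj
  calc ‖Z (D.pt (j + 1)) - Z (D.pt j)‖ ≤ ‖Z (D.pt (j + 1))‖ + ‖Z (D.pt j)‖ := norm_sub_le _ _
    _ ≤ m + m := add_le_add (hZ _ (D.pt_mem_Icc hj)) (hZ _ (D.pt_mem_Icc hj.le))
    _ = 2 * m := (two_mul m).symm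

lemma exists_pos_forall_norm_sub_le_of_mesh_lt {V : Type*} [NormedAddCommGroup V] {X : ℝ → V}
    (hX : ContinuousOn X (Set.Icc 0 1)) {η : ℝ} (hη : 0 < η) :
    ∃ δ > 0, ∀ P : Subdivision 0 1, P.mesh < δ →
      ∀ i < P.N, ∀ x ∈ Set.Icc (P.pt i) (P.pt (i + 1)), ‖X x - X (P.pt i)‖ ≤ η := by
  obtain ⟨δ, hδ, h⟩ := Metric.uniformContinuousOn_iff_le.1
    (isCompact_Icc.uniformContinuousOn_of_continuous hX) η hη
  refine ⟨δ, hδ, fun P hP i hi x hx => ?_⟩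
  have hpt := P.pt_mem_Icc hi.le
  rw [← dist_eq_norm]
  refine h x ⟨hpt.1.trans hx.1, hx.2.trans (P.pt_mem_Icc hi).2⟩ _ hpt ?_
  rw [Real.dist_eq, abs_of_nonneg (sub_nonneg.2 hx.1)]
  linarith [P.pt_succ_sub_pt_le_mesh hi, hx.2]

lemma exists_pos_rpow_mul_lt {r : ℝ} (hr : 0 < r) (k A : ℝ) {c : ℝ} (hc : 0 < c) :
    ∃ η > 0, (k * η) ^ r * A < c := by
  have hcont : ContinuousAt (fun η : ℝ => (k * η) ^ r * A) 0 :=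
    ((continuousAt_const.mul continuousAt_id).rpow_const (Or.inr hr.le)).mul continuousAt_const
  have h0 : (fun η : ℝ => (k * η) ^ r * A) 0 < c := by simpa [Real.zero_rpow hr.ne'] using hc
  obtain ⟨η, hηc, hη⟩ := (((hcont.eventually (gt_mem_nhds h0)).filter_mono
    nhdsWithin_le_nhds).and (self_mem_nhdsWithin (s := Set.Ioi 0))).exists
  exact ⟨η, hη, hηc⟩

namespace IsPiecewiseLinearApprox

variable {V : Type u} [NormedAddCommGroup V] [NormedSpace ℝ V] {P : Subdivision 0 1}
  {X Y : ℝ → V}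

lemma sub_apply_sub_sub_apply (hY : IsPiecewiseLinearApprox P X Y) {i : ℕ} (hi : i < P.N)
    {a b : ℝ} (ha : P.pt i ≤ a) (hab : a ≤ b) (hb : b ≤ P.pt (i + 1)) :
    (X - Y) b - (X - Y) a = (X b - X a)
      - ((b - a) / (P.pt (i + 1) - P.pt i)) • (X (P.pt (i + 1)) - X (P.pt i)) := by
  have hcoef : (b - a) / (P.pt (i + 1) - P.pt i)
      = (b - P.pt i) / (P.pt (i + 1) - P.pt i) - (a - P.pt i) / (P.pt (i + 1) - P.pt i) := by
    ring
  rw [Pi.sub_apply, Pi.sub_apply, hY i hi a ha (hab.trans hb), hY i hi b (ha.trans hab) hb,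
    hcoef, sub_smul]
  abel

lemma norm_sub_apply_sub_le (hY : IsPiecewiseLinearApprox P X Y) {i : ℕ} (hi : i < P.N)
    {a b : ℝ} (ha : P.pt i ≤ a) (hab : a ≤ b) (hb : b ≤ P.pt (i + 1)) :
    ‖(X - Y) b - (X - Y) a‖ ≤ ‖X b - X a‖
      + (b - a) / (P.pt (i + 1) - P.pt i) * ‖X (P.pt (i + 1)) - X (P.pt i)‖ := by
  rw [hY.sub_apply_sub_sub_apply hi ha hab hb]
  refine (norm_sub_le _ _).trans_eq ?_
  rw [norm_smul, Real.norm_of_nonneg (div_nonneg (sub_nonneg.2 hab) (sub_nonneg.2 (P.mono i hi)))]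

lemma sub_apply_pt (hY : IsPiecewiseLinearApprox P X Y) {i : ℕ} (hi : i ≤ P.N) :
    (X - Y) (P.pt i) = 0 := by
  have hleft : ∀ i < P.N, (X - Y) (P.pt i) = 0 := fun i hi => by
    simp [hY i hi _ le_rfl (P.mono i hi)]
  rcases hi.lt_or_eq with hi | rfl
  · exact hleft i hi
  obtain ⟨n, hn⟩ := Nat.exists_eq_add_one_of_ne_zero P.pos.ne'
  have h := hY.sub_apply_sub_sub_apply (i := n) (by omega) le_rfl (P.mono n (by omega)) le_rfl
  rw [hleft n (by omega), sub_zero] at h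
  rw [hn, h]
  -- on a degenerate interval the increment of `X` vanishes as well
  rcases eq_or_ne (P.pt (n + 1) - P.pt n) 0 with hL | hL
  · simp [sub_eq_zero.1 hL]
  · simp [div_self hL]

lemma norm_sub_apply_le (hY : IsPiecewiseLinearApprox P X Y) {η : ℝ}
    (hosc : ∀ i < P.N, ∀ x ∈ Set.Icc (P.pt i) (P.pt (i + 1)), ‖X x - X (P.pt i)‖ ≤ η)
    {x : ℝ} (hx : x ∈ Set.Icc 0 1) : ‖(X - Y) x‖ ≤ 2 * η := by
  have hi := P.idx_lt x
  have h1 := P.pt_idx_le hx.1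
  have h2 := P.le_pt_idx_succ hx.2
  have hL := sub_nonneg.2 (P.mono _ hi)
  calc ‖(X - Y) x‖ = ‖(X - Y) x - (X - Y) (P.pt (P.idx x))‖ := by
        rw [hY.sub_apply_pt hi.le, sub_zero]
    _ ≤ _ := hY.norm_sub_apply_sub_le hi le_rfl h1 h2
    _ ≤ η + 1 * η :=
        add_le_add (hosc _ hi x ⟨h1, h2⟩) (mul_le_mul (div_le_one_of_le₀ (by linarith) hL)
          (hosc _ hi _ ⟨P.mono _ hi, le_rfl⟩) (norm_nonneg _) zero_le_one)
    _ = 2 * η := by ring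

variable {q B : ℝ}

lemma sum_rpow_norm_sub_apply_sub_le (hY : IsPiecewiseLinearApprox P X Y) (hq : 1 ≤ q)
    (hB : ∀ Q : Subdivision 0 1, qVarSum q X Q ≤ B) {D : Subdivision 0 1} {u v : ℕ → ℝ}
    (hD : D.Inscribed u v) {ι : ℕ → ℕ}
    (hι : ∀ j < D.N, ι j < P.N ∧ P.pt (ι j) ≤ u j ∧ v j ≤ P.pt (ι j + 1)) :
    ∑ j ∈ range D.N, ‖(X - Y) (v j) - (X - Y) (u j)‖ ^ q ≤ 2 ^ q * B := by
  have hcoef : ∀ j ∈ range D.N, 0 ≤ (v j - u j) / (P.pt (ι j + 1) - P.pt (ι j)) := fun j hj =>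
    div_nonneg (sub_nonneg.2 (hD j (mem_range.1 hj)).2.1)
      (sub_nonneg.2 (P.mono _ (hι j (mem_range.1 hj)).1))
  calc ∑ j ∈ range D.N, ‖(X - Y) (v j) - (X - Y) (u j)‖ ^ q
      ≤ ∑ j ∈ range D.N, (‖X (v j) - X (u j)‖ + (v j - u j) / (P.pt (ι j + 1) - P.pt (ι j))
          * ‖X (P.pt (ι j + 1)) - X (P.pt (ι j))‖) ^ q := by
        refine sum_le_sum fun j hj => Real.rpow_le_rpow (norm_nonneg _) ?_ (by linarith)
        obtain ⟨hιj, hu, hv⟩ := hι j (mem_range.1 hj)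
        exact hY.norm_sub_apply_sub_le hιj hu (hD j (mem_range.1 hj)).2.1 hv
    _ ≤ 2 ^ (q - 1) * (∑ j ∈ range D.N, ‖X (v j) - X (u j)‖ ^ q
          + ∑ j ∈ range D.N, ((v j - u j) / (P.pt (ι j + 1) - P.pt (ι j))
            * ‖X (P.pt (ι j + 1)) - X (P.pt (ι j))‖) ^ q) :=
        sum_rpow_add_le _ (fun _ _ => norm_nonneg _)
          (fun j hj => mul_nonneg (hcoef j hj) (norm_nonneg _)) hq
    _ ≤ 2 ^ (q - 1) * (B + B) := by
        gcongr
        · exact (D.sum_rpow_norm_sub_le_qVarSum_refine X q hD).trans (hB _)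
        · calc _ = ∑ j ∈ range D.N, ((v j - u j) / (P.pt (ι j + 1) - P.pt (ι j))) ^ q
                * ‖X (P.pt (ι j + 1)) - X (P.pt (ι j))‖ ^ q :=
                sum_congr rfl fun j hj => Real.mul_rpow (hcoef j hj) (norm_nonneg _)
            _ ≤ qVarSum q X P :=
                hD.sum_rpow_div_mul_le P hι hq (w := fun i => ‖X (P.pt (i + 1)) - X (P.pt i)‖ ^ q)
                  fun _ => Real.rpow_nonneg (norm_nonneg _) q
            _ ≤ B := hB P
    _ = 2 ^ q * B := by
        rw [← two_mul, ← mul_assoc, ← Real.rpow_add_one two_ne_zero, sub_add_cancel]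

lemma qVarSum_sub_le (hY : IsPiecewiseLinearApprox P X Y) (hq : 1 ≤ q)
    (hB : ∀ Q : Subdivision 0 1, qVarSum q X Q ≤ B) (D : Subdivision 0 1) :
    qVarSum q (X - Y) D ≤ 4 ^ q * B := by
  -- cut `[D.pt j, D.pt (j + 1)]` at the first and the last point of `P` it contains
  set e : ℕ → ℝ := fun j => min (P.pt (P.idx (D.pt j) + 1)) (D.pt (j + 1))
  set f : ℕ → ℝ := fun j => max (P.pt (P.idx (D.pt (j + 1)))) (D.pt j)
  have hDe : D.Inscribed D.pt e := fun j hj =>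
    ⟨le_rfl, le_min (P.le_pt_idx_succ (D.pt_mem_Icc hj.le).2) (D.mono j hj), min_le_right _ _⟩
  have hDf : D.Inscribed f (fun j => D.pt (j + 1)) := fun j hj =>
    ⟨le_max_right _ _, max_le (P.pt_idx_le (D.pt_mem_Icc hj).1) (D.mono j hj), le_rfl⟩
  calc qVarSum q (X - Y) D
      ≤ ∑ j ∈ range D.N, (‖(X - Y) (e j) - (X - Y) (D.pt j)‖
          + ‖(X - Y) (D.pt (j + 1)) - (X - Y) (f j)‖) ^ q := by
        refine sum_le_sum fun j hj => Real.rpow_le_rpow (norm_nonneg _) ?_ (by linarith)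
        have hj := mem_range.1 hj
        exact P.norm_sub_le_of_forall_eq_zero (fun i hi => hY.sub_apply_pt hi)
          (D.pt_mem_Icc hj.le).1 (D.mono j hj) (D.pt_mem_Icc hj).2
    _ ≤ 2 ^ (q - 1) * (∑ j ∈ range D.N, ‖(X - Y) (e j) - (X - Y) (D.pt j)‖ ^ q
          + ∑ j ∈ range D.N, ‖(X - Y) (D.pt (j + 1)) - (X - Y) (f j)‖ ^ q) :=
        sum_rpow_add_le _ (fun _ _ => norm_nonneg _) (fun _ _ => norm_nonneg _) hq
    _ ≤ 2 ^ (q - 1) * (2 ^ q * B + 2 ^ q * B) := by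
        gcongr
        · exact hY.sum_rpow_norm_sub_apply_sub_le hq hB hDe fun j hj =>
            ⟨P.idx_lt _, P.pt_idx_le (D.pt_mem_Icc hj.le).1, min_le_left _ _⟩
        · exact hY.sum_rpow_norm_sub_apply_sub_le hq hB hDf fun j hj =>
            ⟨P.idx_lt _, le_max_left _ _, P.le_pt_idx_succ (D.pt_mem_Icc hj).2⟩
    _ = 4 ^ q * B := by
        rw [← two_mul, ← mul_assoc, ← mul_assoc, ← Real.rpow_add_one two_ne_zero, sub_add_cancel,
          ← Real.mul_rpow zero_le_two zero_le_two]
        norm_num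

end IsPiecewiseLinearApprox

theorem statement1_general (q q' : ℝ) (hq : 1 ≤ q) (hqq' : q < q')
    (V : Type u) [NormedAddCommGroup V] [NormedSpace ℝ V]
    (X : ℝ → V) (hXcont : ContinuousOn X (Set.Icc 0 1))
    (hXfin : qVar q X < ⊤) :
    ∀ ε > (0 : ℝ), ∃ δ > (0 : ℝ),
      ∀ P : Subdivision 0 1, P.mesh < δ →
        ∀ Y : ℝ → V, IsPiecewiseLinearApprox P X Y →
          qVar q' (fun u => X u - Y u) ≤ ENNReal.ofReal ε := by
  intro ε hε
  have hq0 : 0 < q := zero_lt_one.trans_le hq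
  set B := (qVar q X).toReal ^ q
  have hB : ∀ Q : Subdivision 0 1, qVarSum q X Q ≤ B := qVarSum_le_toReal_qVar_rpow hq0 hXfin.ne
  obtain ⟨η, hη, hηε⟩ := exists_pos_rpow_mul_lt (sub_pos.2 hqq') 4 (4 ^ q * B)
    (Real.rpow_pos_of_pos hε q')
  obtain ⟨δ, hδ, hosc⟩ := exists_pos_forall_norm_sub_le_of_mesh_lt hXcont hη
  refine ⟨δ, hδ, fun P hP Y hY => qVar_le_ofReal_of_qVarSum_le (hq0.trans hqq') hε.le fun D => ?_⟩
  calc qVarSum q' (X - Y) D ≤ (2 * (2 * η)) ^ (q' - q) * qVarSum q (X - Y) D :=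
        qVarSum_le_rpow_mul_qVarSum (fun x hx => hY.norm_sub_apply_le (hosc P hP) hx) hq0 hqq'.le D
    _ ≤ (4 * η) ^ (q' - q) * (4 ^ q * B) := by
        rw [← mul_assoc, show (2 : ℝ) * 2 = 4 by norm_num]
        gcongr
        exact hY.qVarSum_sub_le hq hB D
    _ ≤ ε ^ q' := hηε.le

/-- Let `1 ≤ q < q' < 2` and `X ∈ C_{0,q}(V)`. Then
`‖X − π_P X‖_{q'} → 0` as the mesh `|P| → 0`. -/
theorem statement1 (q q' : ℝ) (hq : 1 ≤ q) (hqq' : q < q') (hq' : q' < 2)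
    (V : Type u) [NormedAddCommGroup V] [NormedSpace ℝ V] [CompleteSpace V]
    (X : ℝ → V) (hX0 : X 0 = 0) (hXcont : ContinuousOn X (Set.Icc 0 1))
    (hXfin : qVar q X < ⊤) :
    ∀ ε > (0 : ℝ), ∃ δ > (0 : ℝ),
      ∀ P : Subdivision 0 1, P.mesh < δ →
        ∀ Y : ℝ → V, IsPiecewiseLinearApprox P X Y →
          qVar q' (fun u => X u - Y u) ≤ ENNReal.ofReal ε :=
  statement1_general q q' hq hqq' V X hXcont hXfin
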